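/- Let A be the single-timescale stochastic gradient descent-ascent (SSGDA) algorithm run for T > 1 iterations, where f and g are jointly l-Lipschitz and jointly L-smooth (l = max{l_f, l_g}, L = max{L_f, L_g}), and the non-increasing step sizes satisfy η^{t′} := max{η^t, γ1^t, γ2^t} ≤ c1/(tL) ≤ 1 with constant c1 > 0, c1 ≠ 1/7. Then A is l1(beta) on-average argument stable with beta ≤ C·max{T, T^{7c1}}/m1 for some constant C depending only on l, L and c1 (not on T or m1). -/

import Mathlib

/-!
STATEMENT 4: SSGDA run for `T > 1` iterations, with `f, g` jointly `l`-Lipschitz and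
jointly `L`-smooth, and non-increasing step sizes satisfying
`max{η^t, γ1^t, γ2^t} ≤ c1/(tL) ≤ 1` with constant `c1 > 0`, `c1 ≠ 1/7`, is `l1(β)`
on-average argument stable with `β ≤ C·max{T, T^{7c1}}/m1`, where `C` depends only on
`l, L, c1` (not on `T, m1`).
-/

open MeasureTheory Finset

noncomputable section

abbrev Vec (d : ℕ) := EuclideanSpace ℝ (Fin d)

/-- Joint (`ℓ2`) distance between two parameter triples. -/
def jdist {dx dy dz : ℕ} (w w' : Vec dx × Vec dy × Vec dz) : ℝ :=
  Real.sqrt (‖w.1 - w'.1‖ ^ 2 + ‖w.2.1 - w'.2.1‖ ^ 2 + ‖w.2.2 - w'.2.2‖ ^ 2)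

/-- Joint gradient (triple of partial gradients) of `h` at `w`. -/
def jgrad {dx dy dz : ℕ} (h : Vec dx × Vec dy × Vec dz → ℝ) (w : Vec dx × Vec dy × Vec dz) :
    Vec dx × Vec dy × Vec dz :=
  (gradient (fun u => h (u, w.2.1, w.2.2)) w.1,
   gradient (fun v => h (w.1, v, w.2.2)) w.2.1,
   gradient (fun v => h (w.1, w.2.1, v)) w.2.2)

/-- One SSGDA iteration: a stochastic gradient descent step on `y`, an ascent step on `z`
(both on `g` at the sampled training example `ζ`), then a descent step on `x` (on `f` at
the sampled validation example `ξ`). -/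
def ssgdaStep {dx dy dz : ℕ} {Ξ Z2 : Type}
    (f : Vec dx × Vec dy × Vec dz → Ξ → ℝ) (g : Vec dx × Vec dy × Vec dz → Z2 → ℝ)
    (η γ1 γ2 : ℝ) (ξ : Ξ) (ζ : Z2)
    (w : Vec dx × Vec dy × Vec dz) : Vec dx × Vec dy × Vec dz :=
  let x := w.1
  let y := w.2.1
  let z := w.2.2
  let y' := y - γ1 • gradient (fun v => g (x, v, z) ζ) y
  let z' := z + γ2 • gradient (fun v => g (x, y', v) ζ) z
  let x' := x - η • gradient (fun u => f (u, y', z') ξ) x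
  (x', y', z')

/-- The SSGDA iterates: at iteration `t+1` a training index `J (t+1)` and a validation
index `I (t+1)` are used together with step sizes `η (t+1), γ1 (t+1), γ2 (t+1)`. -/
def ssgda {dx dy dz m1 m2 : ℕ} {Ξ Z2 : Type}
    (f : Vec dx × Vec dy × Vec dz → Ξ → ℝ) (g : Vec dx × Vec dy × Vec dz → Z2 → ℝ)
    (η γ1 γ2 : ℕ → ℝ) (ξs : Fin m1 → Ξ) (ζs : Fin m2 → Z2)
    (I : ℕ → Fin m1) (J : ℕ → Fin m2) (w0 : Vec dx × Vec dy × Vec dz) :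
    ℕ → Vec dx × Vec dy × Vec dz
  | 0 => w0
  | t + 1 => ssgdaStep f g (η (t + 1)) (γ1 (t + 1)) (γ2 (t + 1))
      (ξs (I (t + 1))) (ζs (J (t + 1))) (ssgda f g η γ1 γ2 ξs ζs I J w0 t)

/-- Extension of a finitely supported index sequence (uniformly distributed on
`Fin T → Fin n`, i.e. i.i.d. uniform indices) to `ℕ`. -/
def extIdx {T n : ℕ} (hT : 0 < T) (I : Fin T → Fin n) : ℕ → Fin n :=
  fun t => I ⟨t % T, Nat.mod_lt t hT⟩

-- basic jdist lemmas
lemma jdist_nonneg {dx dy dz : ℕ} (w w' : Vec dx × Vec dy × Vec dz) : 0 ≤ jdist w w' :=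
  Real.sqrt_nonneg _

lemma jdist_self {dx dy dz : ℕ} (w : Vec dx × Vec dy × Vec dz) : jdist w w = 0 := by
  simp [jdist]

lemma jdist_comm {dx dy dz : ℕ} (w w' : Vec dx × Vec dy × Vec dz) :
    jdist w w' = jdist w' w := by
  unfold jdist
  rw [norm_sub_rev w.1, norm_sub_rev w.2.1, norm_sub_rev w.2.2]

lemma cauchy3 (a1 b1 c1 a2 b2 c2 : ℝ) :
    (a1*a2+b1*b2+c1*c2)^2 ≤ (a1^2+b1^2+c1^2)*(a2^2+b2^2+c2^2) := by
  nlinarith [sq_nonneg (a1*b2-a2*b1), sq_nonneg (a1*c2-a2*c1), sq_nonneg (b1*c2-b2*c1)]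

lemma sqrt3_tri (a1 b1 c1 a2 b2 c2 : ℝ) (ha1 : 0 ≤ a1) (hb1 : 0 ≤ b1) (hc1 : 0 ≤ c1)
    (ha2 : 0 ≤ a2) (hb2 : 0 ≤ b2) (hc2 : 0 ≤ c2) :
    Real.sqrt ((a1+a2)^2+(b1+b2)^2+(c1+c2)^2)
      ≤ Real.sqrt (a1^2+b1^2+c1^2) + Real.sqrt (a2^2+b2^2+c2^2) := by
  set s1 := Real.sqrt (a1^2+b1^2+c1^2) with hs1def
  set s2 := Real.sqrt (a2^2+b2^2+c2^2) with hs2def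
  have hs1 : s1^2 = a1^2+b1^2+c1^2 := Real.sq_sqrt (by positivity)
  have hs2 : s2^2 = a2^2+b2^2+c2^2 := Real.sq_sqrt (by positivity)
  have hs1n : 0 ≤ s1 := Real.sqrt_nonneg _
  have hs2n : 0 ≤ s2 := Real.sqrt_nonneg _
  have hcs : a1*a2+b1*b2+c1*c2 ≤ s1*s2 := by
    have h0 : 0 ≤ a1*a2+b1*b2+c1*c2 := by positivity
    have hc := cauchy3 a1 b1 c1 a2 b2 c2
    nlinarith [mul_nonneg hs1n hs2n]
  have key : (a1+a2)^2+(b1+b2)^2+(c1+c2)^2 ≤ (s1+s2)^2 := by nlinarith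
  calc Real.sqrt ((a1+a2)^2+(b1+b2)^2+(c1+c2)^2)
      ≤ Real.sqrt ((s1+s2)^2) := Real.sqrt_le_sqrt key
    _ = s1+s2 := Real.sqrt_sq (by positivity)

lemma jdist_triangle {dx dy dz : ℕ} (w w' w'' : Vec dx × Vec dy × Vec dz) :
    jdist w w'' ≤ jdist w w' + jdist w' w'' := by
  have tx : ‖w.1 - w''.1‖ ≤ ‖w.1 - w'.1‖ + ‖w'.1 - w''.1‖ := by
    simpa [dist_eq_norm] using dist_triangle w.1 w'.1 w''.1
  have ty : ‖w.2.1 - w''.2.1‖ ≤ ‖w.2.1 - w'.2.1‖ + ‖w'.2.1 - w''.2.1‖ := by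
    simpa [dist_eq_norm] using dist_triangle w.2.1 w'.2.1 w''.2.1
  have tz : ‖w.2.2 - w''.2.2‖ ≤ ‖w.2.2 - w'.2.2‖ + ‖w'.2.2 - w''.2.2‖ := by
    simpa [dist_eq_norm] using dist_triangle w.2.2 w'.2.2 w''.2.2
  have h2 : ‖w.1 - w''.1‖ ^ 2 + ‖w.2.1 - w''.2.1‖ ^ 2 + ‖w.2.2 - w''.2.2‖ ^ 2
      ≤ (‖w.1 - w'.1‖ + ‖w'.1 - w''.1‖)^2 + (‖w.2.1 - w'.2.1‖ + ‖w'.2.1 - w''.2.1‖)^2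
        + (‖w.2.2 - w'.2.2‖ + ‖w'.2.2 - w''.2.2‖)^2 := by
    gcongr <;> first | exact norm_nonneg _ | assumption
  exact le_trans (Real.sqrt_le_sqrt h2)
    (sqrt3_tri _ _ _ _ _ _ (norm_nonneg _) (norm_nonneg _) (norm_nonneg _)
      (norm_nonneg _) (norm_nonneg _) (norm_nonneg _))

lemma jdist_le_sum {dx dy dz : ℕ} (w w' : Vec dx × Vec dy × Vec dz) :
    jdist w w' ≤ ‖w.1 - w'.1‖ + ‖w.2.1 - w'.2.1‖ + ‖w.2.2 - w'.2.2‖ := by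
  unfold jdist
  have h : ‖w.1 - w'.1‖ ^ 2 + ‖w.2.1 - w'.2.1‖ ^ 2 + ‖w.2.2 - w'.2.2‖ ^ 2
      ≤ (‖w.1 - w'.1‖ + ‖w.2.1 - w'.2.1‖ + ‖w.2.2 - w'.2.2‖)^2 := by
    nlinarith [norm_nonneg (w.1 - w'.1), norm_nonneg (w.2.1 - w'.2.1),
      norm_nonneg (w.2.2 - w'.2.2), mul_nonneg (norm_nonneg (w.1 - w'.1)) (norm_nonneg (w.2.1 - w'.2.1))]
  calc Real.sqrt _ ≤ Real.sqrt ((‖w.1 - w'.1‖ + ‖w.2.1 - w'.2.1‖ + ‖w.2.2 - w'.2.2‖)^2) :=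
        Real.sqrt_le_sqrt h
    _ = _ := Real.sqrt_sq (by positivity)

lemma jdist_fst {dx dy dz : ℕ} (u u' : Vec dx) (y : Vec dy) (z : Vec dz) :
    jdist (u, y, z) (u', y, z) = ‖u - u'‖ := by
  simp [jdist, Real.sqrt_sq (norm_nonneg _)]

lemma jdist_snd {dx dy dz : ℕ} (x : Vec dx) (v v' : Vec dy) (z : Vec dz) :
    jdist (x, v, z) (x, v', z) = ‖v - v'‖ := by
  simp [jdist, Real.sqrt_sq (norm_nonneg _)]

lemma jdist_trd {dx dy dz : ℕ} (x : Vec dx) (y : Vec dy) (v v' : Vec dz) :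
    jdist (x, y, v) (x, y, v') = ‖v - v'‖ := by
  simp [jdist, Real.sqrt_sq (norm_nonneg _)]

lemma grad_norm_le {d : ℕ} (φ : Vec d → ℝ) {l : ℝ} (hl : 0 ≤ l)
    (h : ∀ u u', |φ u - φ u'| ≤ l * ‖u - u'‖) (x : Vec d) : ‖gradient φ x‖ ≤ l := by
  have heq : ‖gradient φ x‖ = ‖fderiv ℝ φ x‖ := by
    rw [gradient]
    exact (InnerProductSpace.toDual ℝ (Vec d)).symm.norm_map _
  rw [heq]
  refine norm_fderiv_le_of_lip' ℝ hl (Filter.Eventually.of_forall fun u => ?_)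
  simpa [Real.norm_eq_abs] using h u x



section Det

variable {dx dy dz : ℕ} {Ξ Z2 : Type}
    (f : Vec dx × Vec dy × Vec dz → Ξ → ℝ) (g : Vec dx × Vec dy × Vec dz → Z2 → ℝ)
    {l : ℝ} (hl : 0 ≤ l)
    (hfLip : ∀ w w' ξ, |f w ξ - f w' ξ| ≤ l * jdist w w')
    (hgLip : ∀ w w' ζ, |g w ζ - g w' ζ| ≤ l * jdist w w')

include hl hfLip hgLip in
lemma step_move (η γ1 γ2 : ℝ) (hη : 0 ≤ η) (hγ1 : 0 ≤ γ1) (hγ2 : 0 ≤ γ2) (ξ : Ξ) (ζ : Z2)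
    (w : Vec dx × Vec dy × Vec dz) :
    jdist (ssgdaStep f g η γ1 γ2 ξ ζ w) w ≤ l * (η + γ1 + γ2) := by
  obtain ⟨x, y, z⟩ := w
  set Gy := gradient (fun v => g (x, v, z) ζ) y with hGy
  set y' := y - γ1 • Gy with hy'
  set Gz := gradient (fun v => g (x, y', v) ζ) z with hGz
  set z' := z + γ2 • Gz with hz'
  set Gx := gradient (fun u => f (u, y', z') ξ) x with hGx
  set x' := x - η • Gx with hx'
  have hstep : ssgdaStep f g η γ1 γ2 ξ ζ (x, y, z) = (x', y', z') := rfl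
  rw [hstep]
  have hGyl : ‖Gy‖ ≤ l := by
    refine grad_norm_le _ hl (fun u u' => ?_) y
    simpa [jdist_snd] using hgLip (x, u, z) (x, u', z) ζ
  have hGzl : ‖Gz‖ ≤ l := by
    refine grad_norm_le _ hl (fun u u' => ?_) z
    simpa [jdist_trd] using hgLip (x, y', u) (x, y', u') ζ
  have hGxl : ‖Gx‖ ≤ l := by
    refine grad_norm_le _ hl (fun u u' => ?_) x
    simpa [jdist_fst] using hfLip (u, y', z') (u', y', z') ξ
  have h1 : ‖x' - x‖ = η * ‖Gx‖ := by
    rw [hx']; simp [norm_smul, abs_of_nonneg hη]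
  have h2 : ‖y' - y‖ = γ1 * ‖Gy‖ := by
    rw [hy']; simp [norm_smul, abs_of_nonneg hγ1]
  have h3 : ‖z' - z‖ = γ2 * ‖Gz‖ := by
    rw [hz']; simp [norm_smul, abs_of_nonneg hγ2]
  calc jdist (x', y', z') (x, y, z)
      ≤ ‖x' - x‖ + ‖y' - y‖ + ‖z' - z‖ := jdist_le_sum _ _
    _ = η * ‖Gx‖ + γ1 * ‖Gy‖ + γ2 * ‖Gz‖ := by rw [h1, h2, h3]
    _ ≤ η * l + γ1 * l + γ2 * l := by gcongr
    _ = l * (η + γ1 + γ2) := by ring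

-- two runs agree as long as the data they used agreed
lemma until_hit {m1 m2 : ℕ} (η γ1 γ2 : ℕ → ℝ) (ξs ξs' : Fin m1 → Ξ) (ζs : Fin m2 → Z2)
    (Ifun : ℕ → Fin m1) (Jfun : ℕ → Fin m2) (w0 : Vec dx × Vec dy × Vec dz) (t : ℕ)
    (h : ∀ r, 1 ≤ r → r ≤ t → ξs (Ifun r) = ξs' (Ifun r)) :
    ssgda f g η γ1 γ2 ξs ζs Ifun Jfun w0 t = ssgda f g η γ1 γ2 ξs' ζs Ifun Jfun w0 t := by
  induction t with
  | zero => rfl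
  | succ t ih =>
    have hdat := h (t + 1) (Nat.le_add_left 1 t) le_rfl
    have hrec := ih (fun r h1 h2 => h r h1 (Nat.le_succ_of_le h2))
    simp only [ssgda, hrec, hdat]

include hl hfLip hgLip in
lemma step_diff {m1 m2 : ℕ} (η γ1 γ2 : ℕ → ℝ) (hpos : ∀ t, 0 ≤ η t ∧ 0 ≤ γ1 t ∧ 0 ≤ γ2 t)
    (ξs ξs' : Fin m1 → Ξ) (ζs : Fin m2 → Z2)
    (Ifun : ℕ → Fin m1) (Jfun : ℕ → Fin m2) (w0 : Vec dx × Vec dy × Vec dz) (t : ℕ) :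
    jdist (ssgda f g η γ1 γ2 ξs ζs Ifun Jfun w0 (t+1))
        (ssgda f g η γ1 γ2 ξs' ζs Ifun Jfun w0 (t+1))
      ≤ jdist (ssgda f g η γ1 γ2 ξs ζs Ifun Jfun w0 t)
          (ssgda f g η γ1 γ2 ξs' ζs Ifun Jfun w0 t)
        + 2 * l * (η (t+1) + γ1 (t+1) + γ2 (t+1)) := by
  set w := ssgda f g η γ1 γ2 ξs ζs Ifun Jfun w0 t
  set w' := ssgda f g η γ1 γ2 ξs' ζs Ifun Jfun w0 t
  set a := ssgda f g η γ1 γ2 ξs ζs Ifun Jfun w0 (t+1) with ha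
  set b := ssgda f g η γ1 γ2 ξs' ζs Ifun Jfun w0 (t+1) with hb
  have haw : jdist a w ≤ l * (η (t+1) + γ1 (t+1) + γ2 (t+1)) := by
    rw [ha]
    exact step_move f g hl hfLip hgLip _ _ _ (hpos (t+1)).1 (hpos (t+1)).2.1 (hpos (t+1)).2.2 _ _ _
  have hwb : jdist w' b ≤ l * (η (t+1) + γ1 (t+1) + γ2 (t+1)) := by
    rw [jdist_comm, hb]
    exact step_move f g hl hfLip hgLip _ _ _ (hpos (t+1)).1 (hpos (t+1)).2.1 (hpos (t+1)).2.2 _ _ _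
  calc jdist a b ≤ jdist a w + jdist w b := jdist_triangle _ _ _
    _ ≤ jdist a w + (jdist w w' + jdist w' b) := by
        have := jdist_triangle w w' b; linarith
    _ ≤ _ := by linarith




include hl hfLip hgLip in
lemma key_bound {m1 m2 : ℕ} {L c1 : ℝ} (hL : 0 < L) (hc1 : 0 < c1)
    (η γ1 γ2 : ℕ → ℝ) (hpos : ∀ t, 0 ≤ η t ∧ 0 ≤ γ1 t ∧ 0 ≤ γ2 t)
    (hstep : ∀ t : ℕ, 1 ≤ t → max (η t) (max (γ1 t) (γ2 t)) ≤ c1 / (t * L))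
    (ξs ξs' : Fin m1 → Ξ) (ζs : Fin m2 → Z2)
    (Ifun : ℕ → Fin m1) (Jfun : ℕ → Fin m2) (w0 : Vec dx × Vec dy × Vec dz)
    (T : ℕ) (i : Fin m1) (hdiff : ∀ j, j ≠ i → ξs j = ξs' j) :
    jdist (ssgda f g η γ1 γ2 ξs ζs Ifun Jfun w0 T)
        (ssgda f g η γ1 γ2 ξs' ζs Ifun Jfun w0 T)
      ≤ ∑ t ∈ Icc 1 T, (if Ifun t = i then (∑ s ∈ Icc t T, 6 * l * (c1 / (s * L))) else 0) := by
  have hbnn : ∀ s : ℕ, 0 ≤ 6 * l * (c1 / (s * L)) := by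
    intro s
    exact mul_nonneg (by linarith) (div_nonneg hc1.le (by positivity))
  have hrhs_nonneg : ∀ t ∈ Icc 1 T,
      (0:ℝ) ≤ (if Ifun t = i then (∑ s ∈ Icc t T, 6 * l * (c1 / (s * L))) else 0) := by
    intro t _
    split
    · exact Finset.sum_nonneg fun s _ => hbnn s
    · exact le_refl 0
  by_cases hhit : ∃ t, (1 ≤ t ∧ t ≤ T) ∧ Ifun t = i
  · classical
    set t1 := Nat.find hhit with ht1def
    obtain ⟨⟨h1, hT1⟩, hit⟩ := Nat.find_spec hhit
    have hmin : ∀ r, r < t1 → ¬((1 ≤ r ∧ r ≤ T) ∧ Ifun r = i) := fun r hr => Nat.find_min hhit hr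
    -- before time t1 the runs agree
    have hbase : ssgda f g η γ1 γ2 ξs ζs Ifun Jfun w0 (t1 - 1)
        = ssgda f g η γ1 γ2 ξs' ζs Ifun Jfun w0 (t1 - 1) := by
      refine until_hit f g η γ1 γ2 ξs ξs' ζs Ifun Jfun w0 (t1 - 1) (fun r hr1 hr2 => ?_)
      have hrT : r ≤ T := le_trans hr2 (le_trans (Nat.sub_le _ _) hT1)
      have hrlt : r < t1 := lt_of_le_of_lt hr2 (Nat.sub_lt (lt_of_lt_of_le Nat.one_pos h1) Nat.one_pos)
      have hne : Ifun r ≠ i := fun he => hmin r hrlt ⟨⟨hr1, hrT⟩, he⟩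
      exact hdiff _ hne
    -- inductive growth bound from t1 - 1 on
    have claim : ∀ u, t1 - 1 ≤ u → u ≤ T →
        jdist (ssgda f g η γ1 γ2 ξs ζs Ifun Jfun w0 u)
            (ssgda f g η γ1 γ2 ξs' ζs Ifun Jfun w0 u)
          ≤ ∑ s ∈ Icc t1 u, 6 * l * (c1 / (s * L)) := by
      intro u hu
      induction u, hu using Nat.le_induction with
      | base =>
        intro _
        rw [hbase, jdist_self]
        exact Finset.sum_nonneg fun s _ => hbnn s
      | succ u hu ih =>
        intro huT
        have ihv := ih (le_trans (Nat.le_succ u) huT)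
        have hgrow := step_diff f g hl hfLip hgLip η γ1 γ2 hpos ξs ξs' ζs Ifun Jfun w0 u
        have hη : η (u+1) ≤ c1 / ((u+1 : ℕ) * L) :=
          le_trans (le_max_left _ _) (hstep (u+1) (Nat.le_add_left 1 u))
        have hγ1 : γ1 (u+1) ≤ c1 / ((u+1 : ℕ) * L) :=
          le_trans (le_trans (le_max_left _ _) (le_max_right _ _)) (hstep (u+1) (Nat.le_add_left 1 u))
        have hγ2 : γ2 (u+1) ≤ c1 / ((u+1 : ℕ) * L) :=
          le_trans (le_trans (le_max_right _ _) (le_max_right _ _)) (hstep (u+1) (Nat.le_add_left 1 u))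
        have hsum : ∑ s ∈ Icc t1 (u+1), 6 * l * (c1 / (s * L))
            = (∑ s ∈ Icc t1 u, 6 * l * (c1 / (s * L))) + 6 * l * (c1 / ((u+1 : ℕ) * L)) := by
          rw [Finset.sum_Icc_succ_top (by omega : t1 ≤ u + 1)]
        rw [hsum]
        have h2l : 2 * l * (η (u+1) + γ1 (u+1) + γ2 (u+1)) ≤ 6 * l * (c1 / ((u+1 : ℕ) * L)) := by
          nlinarith [hl, hη, hγ1, hγ2, (hpos (u+1)).1, (hpos (u+1)).2.1, (hpos (u+1)).2.2]
        linarith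
    have hfinal := claim T (le_trans (Nat.sub_le _ _) hT1) le_rfl
    refine le_trans hfinal ?_
    have hterm : (∑ s ∈ Icc t1 T, 6 * l * (c1 / (s * L)))
        = (if Ifun t1 = i then (∑ s ∈ Icc t1 T, 6 * l * (c1 / (s * L))) else 0) := by
      rw [if_pos hit]
    rw [hterm]
    exact Finset.single_le_sum hrhs_nonneg (Finset.mem_Icc.mpr ⟨h1, hT1⟩)
  · push_neg at hhit
    have heq : ssgda f g η γ1 γ2 ξs ζs Ifun Jfun w0 T
        = ssgda f g η γ1 γ2 ξs' ζs Ifun Jfun w0 T := by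
      refine until_hit f g η γ1 γ2 ξs ξs' ζs Ifun Jfun w0 T (fun r hr1 hr2 => ?_)
      exact hdiff _ (hhit r ⟨hr1, hr2⟩)
    rw [heq, jdist_self]
    exact Finset.sum_nonneg hrhs_nonneg

end Det


lemma double_sum_eval {T : ℕ} {l c1 L : ℝ} (hl : 0 ≤ l) (hc1 : 0 < c1) (hL : 0 < L) :
    ∑ t ∈ Icc 1 T, ∑ s ∈ Icc t T, 6 * l * (c1 / (s * L)) = T * (6 * l * c1 / L) := by
  rw [Finset.sum_comm' (t' := Icc 1 T) (s' := fun s => Icc 1 s) (f := fun _ s => 6 * l * (c1 / (s * L)))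
    (by intro x y; simp only [Finset.mem_Icc]; omega)]
  have hinner : ∀ s ∈ Icc 1 T, (∑ _t ∈ Icc 1 s, 6 * l * (c1 / (s * L))) = 6 * l * c1 / L := by
    intro s hs
    rw [Finset.sum_const, Nat.card_Icc]
    have hs1 : 1 ≤ s := (Finset.mem_Icc.mp hs).1
    have hsne : (s : ℝ) ≠ 0 := by positivity
    rw [nsmul_eq_mul]
    push_cast [Nat.sub_add_cancel hs1]
    field_simp
  rw [Finset.sum_congr rfl hinner, Finset.sum_const, Nat.card_Icc, nsmul_eq_mul]
  simp

lemma integral_le_bound {α : Type*} [MeasurableSpace α] (μ : Measure α) [IsProbabilityMeasure μ]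
    (φ : α → ℝ) {B : ℝ} (hB : 0 ≤ B) (h : ∀ x, φ x ≤ B) : ∫ x, φ x ∂μ ≤ B := by
  by_cases hi : Integrable φ μ
  · calc ∫ x, φ x ∂μ ≤ ∫ _x, B ∂μ := integral_mono hi (integrable_const B) h
      _ = B := by simp
  · rw [integral_undef hi]; exact hB


theorem stmt_4
    {dx dy dz : ℕ} {Ξ Z2 : Type} [MeasurableSpace Ξ] [MeasurableSpace Z2]
    (f : Vec dx × Vec dy × Vec dz → Ξ → ℝ)
    (g : Vec dx × Vec dy × Vec dz → Z2 → ℝ)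
    (l L c1 : ℝ) (hl : 0 < l) (hL : 0 < L) (hc1 : 0 < c1) (hc1' : c1 ≠ 1 / 7)
    -- joint Lipschitz continuity of `f` and `g` (`l = max{l_f, l_g}`)
    (hfLip : ∀ w w' ξ, |f w ξ - f w' ξ| ≤ l * jdist w w')
    (hgLip : ∀ w w' ζ, |g w ζ - g w' ζ| ≤ l * jdist w w')
    -- joint smoothness of `f` and `g` (`L = max{L_f, L_g}`)
    (hfSmooth : ∀ w w' ξ,
      jdist (jgrad (fun v => f v ξ) w) (jgrad (fun v => f v ξ) w') ≤ L * jdist w w')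
    (hgSmooth : ∀ w w' ζ,
      jdist (jgrad (fun v => g v ζ) w) (jgrad (fun v => g v ζ) w') ≤ L * jdist w w') :
    -- a constant depending only on `l, L, c1`, not on `T` or `m1`
    ∃ C : ℝ, 0 < C ∧
      ∀ (m1 m2 T : ℕ) (hT : 1 < T), 0 < m1 → 0 < m2 →
      ∀ (μ1 : Measure Ξ) (μ2 : Measure Z2),
        IsProbabilityMeasure μ1 → IsProbabilityMeasure μ2 →
      ∀ (η γ1 γ2 : ℕ → ℝ),
        -- non-increasing nonnegative step sizes
        Antitone η → Antitone γ1 → Antitone γ2 →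
        (∀ t, 0 ≤ η t ∧ 0 ≤ γ1 t ∧ 0 ≤ γ2 t) →
        -- `η^{t′} = max{η^t, γ1^t, γ2^t} ≤ c1/(tL) ≤ 1` with `c1 = 1/7`
        (∀ t : ℕ, 1 ≤ t →
          max (η t) (max (γ1 t) (γ2 t)) ≤ c1 / (t * L)
            ∧ c1 / (t * L) ≤ 1) →
      ∀ w0 : Vec dx × Vec dy × Vec dz,
        -- the on-average argument stability parameter `β` of SSGDA is at most
        -- `C·max{T, T^{7c1}}/m1`; the expectation is over the validation set, its i.i.d. copy,
        -- the training set, and the uniformly i.i.d. sampled indices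
        (∫ ξs, ∫ ξt, ∫ ζs,
            (∑ I : Fin T → Fin m1, ∑ J : Fin T → Fin m2,
              (1 / (m1 : ℝ)) * ∑ i : Fin m1,
                jdist
                  (ssgda f g η γ1 γ2 ξs ζs
                    (extIdx (Nat.lt_trans Nat.one_pos hT) I)
                    (extIdx (Nat.lt_trans Nat.one_pos hT) J) w0 T)
                  (ssgda f g η γ1 γ2 (Function.update ξs i (ξt i)) ζs
                    (extIdx (Nat.lt_trans Nat.one_pos hT) I)
                    (extIdx (Nat.lt_trans Nat.one_pos hT) J) w0 T))
              / ((Fintype.card (Fin T → Fin m1) : ℝ) * (Fintype.card (Fin T → Fin m2) : ℝ))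
          ∂(Measure.pi fun _ : Fin m2 => μ2)
          ∂(Measure.pi fun _ : Fin m1 => μ1)
          ∂(Measure.pi fun _ : Fin m1 => μ1))
        ≤ C * max (T : ℝ) ((T : ℝ) ^ (7 * c1)) / m1 := by
  classical
  refine ⟨6 * l * c1 / L, by positivity, ?_⟩
  intro m1 m2 T hT hm1 hm2 μ1 μ2 hμ1 hμ2 η γ1 γ2 _ _ _ hpos hstep w0
  set C := 6 * l * c1 / L with hC
  -- the final bound and its nonnegativity
  have hT1 : (1 : ℝ) ≤ (T : ℝ) := by exact_mod_cast Nat.one_le_iff_ne_zero.mpr (by omega)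
  have hTmax : (T : ℝ) ≤ max (T : ℝ) ((T : ℝ) ^ (7 * c1)) := le_max_left _ _
  have hBpos : 0 ≤ C * max (T : ℝ) ((T : ℝ) ^ (7 * c1)) / m1 := by
    have h1 : (0:ℝ) < C := by rw [hC]; positivity
    have h2 : (0:ℝ) ≤ max (T : ℝ) ((T : ℝ) ^ (7 * c1)) := le_trans (by linarith) hTmax
    positivity
  set B := C * max (T : ℝ) ((T : ℝ) ^ (7 * c1)) / m1 with hB
  -- pointwise bound on the innermost expression
  have hpoint : ∀ (ξs : Fin m1 → Ξ) (ξt : Fin m1 → Ξ) (ζs : Fin m2 → Z2),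
      (∑ I : Fin T → Fin m1, ∑ J : Fin T → Fin m2,
        (1 / (m1 : ℝ)) * ∑ i : Fin m1,
          jdist
            (ssgda f g η γ1 γ2 ξs ζs
              (extIdx (Nat.lt_trans Nat.one_pos hT) I)
              (extIdx (Nat.lt_trans Nat.one_pos hT) J) w0 T)
            (ssgda f g η γ1 γ2 (Function.update ξs i (ξt i)) ζs
              (extIdx (Nat.lt_trans Nat.one_pos hT) I)
              (extIdx (Nat.lt_trans Nat.one_pos hT) J) w0 T))
        / ((Fintype.card (Fin T → Fin m1) : ℝ) * (Fintype.card (Fin T → Fin m2) : ℝ)) ≤ B := by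
    intro ξs ξt ζs
    set cI := (Fintype.card (Fin T → Fin m1) : ℝ) with hcI
    set cJ := (Fintype.card (Fin T → Fin m2) : ℝ) with hcJ
    have hcIpos : (0:ℝ) < cI := by
      have h : 0 < Fintype.card (Fin T → Fin m1) :=
        Fintype.card_pos_iff.mpr ⟨fun _ => ⟨0, hm1⟩⟩
      rw [hcI]; exact_mod_cast h
    have hcJpos : (0:ℝ) < cJ := by
      have h : 0 < Fintype.card (Fin T → Fin m2) :=
        Fintype.card_pos_iff.mpr ⟨fun _ => ⟨0, hm2⟩⟩
      rw [hcJ]; exact_mod_cast h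
    -- deterministic bound per (I, J)
    have hD : ∀ (I : Fin T → Fin m1) (J : Fin T → Fin m2),
        (1 / (m1 : ℝ)) * ∑ i : Fin m1,
          jdist
            (ssgda f g η γ1 γ2 ξs ζs
              (extIdx (Nat.lt_trans Nat.one_pos hT) I)
              (extIdx (Nat.lt_trans Nat.one_pos hT) J) w0 T)
            (ssgda f g η γ1 γ2 (Function.update ξs i (ξt i)) ζs
              (extIdx (Nat.lt_trans Nat.one_pos hT) I)
              (extIdx (Nat.lt_trans Nat.one_pos hT) J) w0 T)
          ≤ (1 / (m1 : ℝ)) * (T * (6 * l * c1 / L)) := by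
      intro I J
      have hsum_i : ∑ i : Fin m1,
          jdist
            (ssgda f g η γ1 γ2 ξs ζs
              (extIdx (Nat.lt_trans Nat.one_pos hT) I)
              (extIdx (Nat.lt_trans Nat.one_pos hT) J) w0 T)
            (ssgda f g η γ1 γ2 (Function.update ξs i (ξt i)) ζs
              (extIdx (Nat.lt_trans Nat.one_pos hT) I)
              (extIdx (Nat.lt_trans Nat.one_pos hT) J) w0 T)
          ≤ T * (6 * l * c1 / L) := by
        have hbd : ∀ i : Fin m1,
            jdist
              (ssgda f g η γ1 γ2 ξs ζs
                (extIdx (Nat.lt_trans Nat.one_pos hT) I)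
                (extIdx (Nat.lt_trans Nat.one_pos hT) J) w0 T)
              (ssgda f g η γ1 γ2 (Function.update ξs i (ξt i)) ζs
                (extIdx (Nat.lt_trans Nat.one_pos hT) I)
                (extIdx (Nat.lt_trans Nat.one_pos hT) J) w0 T)
            ≤ ∑ t ∈ Icc 1 T, (if extIdx (Nat.lt_trans Nat.one_pos hT) I t = i
                then (∑ s ∈ Icc t T, 6 * l * (c1 / (s * L))) else 0) := by
          intro i
          exact key_bound f g hl.le hfLip hgLip hL hc1 η γ1 γ2 hpos
            (fun t ht => (hstep t ht).1) ξs (Function.update ξs i (ξt i)) ζs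
            (extIdx (Nat.lt_trans Nat.one_pos hT) I) (extIdx (Nat.lt_trans Nat.one_pos hT) J)
            w0 T i (fun j hj => (Function.update_of_ne hj _ _).symm)
        calc ∑ i : Fin m1, _ ≤ ∑ i : Fin m1, ∑ t ∈ Icc 1 T,
              (if extIdx (Nat.lt_trans Nat.one_pos hT) I t = i
                then (∑ s ∈ Icc t T, 6 * l * (c1 / (s * L))) else 0) :=
            Finset.sum_le_sum (fun i _ => hbd i)
          _ = ∑ t ∈ Icc 1 T, ∑ i : Fin m1,
              (if extIdx (Nat.lt_trans Nat.one_pos hT) I t = i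
                then (∑ s ∈ Icc t T, 6 * l * (c1 / (s * L))) else 0) := Finset.sum_comm
          _ = ∑ t ∈ Icc 1 T, ∑ s ∈ Icc t T, 6 * l * (c1 / (s * L)) := by
              refine Finset.sum_congr rfl (fun t _ => ?_)
              rw [Finset.sum_ite_eq Finset.univ (extIdx (Nat.lt_trans Nat.one_pos hT) I t)
                (fun _ => ∑ s ∈ Icc t T, 6 * l * (c1 / (s * L)))]
              simp
          _ = T * (6 * l * c1 / L) := double_sum_eval hl.le hc1 hL
      have hm1' : (0:ℝ) < (m1 : ℝ) := by exact_mod_cast hm1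
      have : (0:ℝ) ≤ 1 / (m1 : ℝ) := by positivity
      exact mul_le_mul_of_nonneg_left hsum_i this
    -- sum over I, J and divide
    have hnum : (∑ I : Fin T → Fin m1, ∑ J : Fin T → Fin m2,
        (1 / (m1 : ℝ)) * ∑ i : Fin m1,
          jdist
            (ssgda f g η γ1 γ2 ξs ζs
              (extIdx (Nat.lt_trans Nat.one_pos hT) I)
              (extIdx (Nat.lt_trans Nat.one_pos hT) J) w0 T)
            (ssgda f g η γ1 γ2 (Function.update ξs i (ξt i)) ζs
              (extIdx (Nat.lt_trans Nat.one_pos hT) I)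
              (extIdx (Nat.lt_trans Nat.one_pos hT) J) w0 T))
        ≤ cI * cJ * ((1 / (m1 : ℝ)) * (T * (6 * l * c1 / L))) := by
      calc (∑ I : Fin T → Fin m1, ∑ J : Fin T → Fin m2, _)
          ≤ ∑ _I : Fin T → Fin m1, ∑ _J : Fin T → Fin m2,
            ((1 / (m1 : ℝ)) * (T * (6 * l * c1 / L))) :=
            Finset.sum_le_sum (fun I _ => Finset.sum_le_sum (fun J _ => hD I J))
        _ = cI * cJ * ((1 / (m1 : ℝ)) * (T * (6 * l * c1 / L))) := by
            rw [Finset.sum_const, Finset.sum_const, Finset.card_univ, Finset.card_univ,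
              nsmul_eq_mul, nsmul_eq_mul, hcI, hcJ]
            ring
    rw [div_le_iff₀ (by positivity)]
    refine le_trans hnum ?_
    have hfin : (1 / (m1 : ℝ)) * (T * (6 * l * c1 / L)) ≤ B := by
      rw [hB, hC]
      have hm1' : (0:ℝ) < (m1 : ℝ) := by exact_mod_cast hm1
      have hinv : (0:ℝ) ≤ ((m1:ℝ))⁻¹ := by positivity
      have hkey : (T:ℝ) * (6 * l * c1 / L) ≤ 6 * l * c1 / L * max (T : ℝ) ((T : ℝ) ^ (7 * c1)) := by
        have hnn : (0:ℝ) ≤ 6 * l * c1 / L := by positivity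
        calc (T:ℝ) * (6 * l * c1 / L) ≤ max (T : ℝ) ((T : ℝ) ^ (7 * c1)) * (6 * l * c1 / L) :=
              mul_le_mul_of_nonneg_right hTmax hnn
          _ = _ := by ring
      calc (1 / (m1 : ℝ)) * ((T:ℝ) * (6 * l * c1 / L))
          = ((T:ℝ) * (6 * l * c1 / L)) * ((m1:ℝ))⁻¹ := by ring
        _ ≤ (6 * l * c1 / L * max (T : ℝ) ((T : ℝ) ^ (7 * c1))) * ((m1:ℝ))⁻¹ :=
            mul_le_mul_of_nonneg_right hkey hinv
        _ = 6 * l * c1 / L * max (T : ℝ) ((T : ℝ) ^ (7 * c1)) / (m1:ℝ) := by ring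
    calc cI * cJ * ((1 / (m1 : ℝ)) * (T * (6 * l * c1 / L)))
        ≤ cI * cJ * B := by
          exact mul_le_mul_of_nonneg_left hfin (by positivity)
      _ = B * (cI * cJ) := by ring
  -- integrate the pointwise bound three times
  refine integral_le_bound _ _ hBpos (fun ξs => ?_)
  refine integral_le_bound _ _ hBpos (fun ξt => ?_)
  exact integral_le_bound _ _ hBpos (fun ζs => hpoint ξs ξt ζs)


end
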